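/- Let D be a digraph with at least one arc. Then the following are equivalent: (i) every L-class and every R-class of ⟨D⟩ contains at most one idempotent; (ii) ⟨D⟩ is J-trivial; (iii) D is acyclic and every vertex of D has out-degree at most 1. -/

import Mathlib

/-- The transformation of `{1,…,n}` sending `a` to `b` and fixing all other points. -/
def arcT {n : ℕ} (a b : Fin n) : Fin n → Fin n := fun v => if v = a then b else v

/-- The semigroup `⟨D⟩` generated by the arcs of the digraph `D`; transformations act on
the right, so a product `ε₁ε₂⋯ε_k` is the function `ε_k ∘ ⋯ ∘ ε₁`. -/
def genSg {n : ℕ} (D : Set (Fin n × Fin n)) : Set (Fin n → Fin n) :=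
  { α | ∃ l : List (Fin n × Fin n), l ≠ [] ∧ (∀ p ∈ l, p ∈ D) ∧
      α = l.foldl (fun f p => arcT p.1 p.2 ∘ f) id }

/-- The product `x·y` in the right-action convention: apply `x` first, then `y`. -/
def sgMul {n : ℕ} (x y : Fin n → Fin n) : Fin n → Fin n := y ∘ x

/-- The right ideal `xS¹ = {x} ∪ xS`. -/
def rIdeal {n : ℕ} (S : Set (Fin n → Fin n)) (x : Fin n → Fin n) : Set (Fin n → Fin n) :=
  insert x { y | ∃ s ∈ S, y = sgMul x s }

/-- The left ideal `S¹x = {x} ∪ Sx`. -/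
def lIdeal {n : ℕ} (S : Set (Fin n → Fin n)) (x : Fin n → Fin n) : Set (Fin n → Fin n) :=
  insert x { y | ∃ s ∈ S, y = sgMul s x }

/-- The two-sided ideal `S¹xS¹`. -/
def jIdeal {n : ℕ} (S : Set (Fin n → Fin n)) (x : Fin n → Fin n) : Set (Fin n → Fin n) :=
  { y | ∃ s ∈ insert id S, ∃ t ∈ insert id S, y = sgMul s (sgMul x t) }

def RRel {n : ℕ} (S : Set (Fin n → Fin n)) (x y : Fin n → Fin n) : Prop :=
  rIdeal S x = rIdeal S y

def LRel {n : ℕ} (S : Set (Fin n → Fin n)) (x y : Fin n → Fin n) : Prop :=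
  lIdeal S x = lIdeal S y

def JRel {n : ℕ} (S : Set (Fin n → Fin n)) (x y : Fin n → Fin n) : Prop :=
  jIdeal S x = jIdeal S y

def RTrivial {n : ℕ} (S : Set (Fin n → Fin n)) : Prop :=
  ∀ x ∈ S, ∀ y ∈ S, RRel S x y → x = y

def LTrivial {n : ℕ} (S : Set (Fin n → Fin n)) : Prop :=
  ∀ x ∈ S, ∀ y ∈ S, LRel S x y → x = y

def HTrivial {n : ℕ} (S : Set (Fin n → Fin n)) : Prop :=
  ∀ x ∈ S, ∀ y ∈ S, RRel S x y → LRel S x y → x = y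

def JTrivial {n : ℕ} (S : Set (Fin n → Fin n)) : Prop :=
  ∀ x ∈ S, ∀ y ∈ S, JRel S x y → x = y

/-- `α` has a cycle of length `k`: `k` distinct points `a₀,…,a_{k-1}` with
`α(aᵢ) = a_{i+1 mod k}`. -/
def IsCycleOf {n : ℕ} (α : Fin n → Fin n) (k : ℕ) : Prop :=
  0 < k ∧ ∃ a : ZMod k → Fin n, Function.Injective a ∧ ∀ i, α (a i) = a (i + 1)

/-- `l(D)`: the maximal length of a cycle of an element of `⟨D⟩`. -/
noncomputable def lD {n : ℕ} (D : Set (Fin n × Fin n)) : ℕ :=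
  sSup { k | ∃ α ∈ genSg D, IsCycleOf α k }

/-- The arc set of a graph. -/
def arcsOf {n : ℕ} (G : SimpleGraph (Fin n)) : Set (Fin n × Fin n) :=
  { p | G.Adj p.1 p.2 }

/-- `l(G)` for a graph `G`. -/
noncomputable def lG {n : ℕ} (G : SimpleGraph (Fin n)) : ℕ := lD (arcsOf G)

/-- Reachability along directed walks of `D`. -/
def dreach {n : ℕ} (D : Set (Fin n × Fin n)) : Fin n → Fin n → Prop :=
  Relation.ReflTransGen (fun a b => (a, b) ∈ D)

/-- The strong component of the vertex `v`. -/
def strongComp {n : ℕ} (D : Set (Fin n × Fin n)) (v : Fin n) : Set (Fin n) :=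
  { u | dreach D u v ∧ dreach D v u }

/-- The underlying graph of the digraph `D`. -/
def underlying {n : ℕ} (D : Set (Fin n × Fin n)) : SimpleGraph (Fin n) where
  Adj a b := a ≠ b ∧ ((a, b) ∈ D ∨ (b, a) ∈ D)
  symm := ⟨fun a b h => ⟨h.1.symm, h.2.symm⟩⟩
  loopless := ⟨fun a h => h.1 rfl⟩

/-- `v 0, v 1, …, v r` is a cycle of the digraph `D`. -/
def IsDCycle {n : ℕ} (D : Set (Fin n × Fin n)) (r : ℕ) (v : ℕ → Fin n) : Prop :=
  1 ≤ r ∧ v r = v 0 ∧ (∀ i < r, ∀ j < r, v i = v j → i = j) ∧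
    ∀ i < r, (v i, v (i + 1)) ∈ D

def HasDCycle {n : ℕ} (D : Set (Fin n × Fin n)) : Prop := ∃ r v, IsDCycle D r v

def DAcyclic {n : ℕ} (D : Set (Fin n × Fin n)) : Prop := ¬ HasDCycle D

/-- `G` is a subgroup contained in the transformation semigroup `S`. -/
def IsSubgroupIn {n : ℕ} (S G : Set (Fin n → Fin n)) : Prop :=
  G ⊆ S ∧ (∀ x ∈ G, ∀ y ∈ G, sgMul x y ∈ G) ∧
    ∃ e ∈ G, (∀ x ∈ G, sgMul e x = x ∧ sgMul x e = x) ∧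
      ∀ x ∈ G, ∃ y ∈ G, sgMul x y = e ∧ sgMul y x = e

/-- Every subgroup of `S` is trivial. -/
def SgAperiodic {n : ℕ} (S : Set (Fin n → Fin n)) : Prop :=
  ∀ G, IsSubgroupIn S G → G.Subsingleton


/-! An arc `(a, b)` and, more generally, a walk `v₀ → v₁ → ⋯ → v_k` of `D` multiply
out to the map collapsing all of `v₀, …, v_k` onto `v_k`. Two arcs `(a, b)`, `(a, c)` give
`L`-related idempotents, and a cycle through `v₀ → v₁` gives two `R`-related idempotents
collapsing the cycle onto `v₀` and onto `v₁`; so (i) forces out-degrees at most one and no cycles.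
Conversely, if all out-degrees are at most one, every element of `⟨D⟩` is inflationary and
monotone for reachability in `D`, which is a partial order when `D` is acyclic; then
`x = s y t` and `y = s' x t'` give `y v ≤ x v ≤ y v` pointwise. -/

section Ideals

variable {n : ℕ} {S : Set (Fin n → Fin n)}

theorem rIdeal_subset_of_mem (hS : ∀ x ∈ S, ∀ y ∈ S, sgMul x y ∈ S) {x y : Fin n → Fin n}
    (h : x ∈ rIdeal S y) : rIdeal S x ⊆ rIdeal S y := by
  rcases h with rfl | ⟨t, ht, rfl⟩
  · rfl
  rintro z (rfl | ⟨u, hu, rfl⟩)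
  exacts [Or.inr ⟨t, ht, rfl⟩, Or.inr ⟨sgMul t u, hS t ht u hu, rfl⟩]

theorem lIdeal_subset_of_mem (hS : ∀ x ∈ S, ∀ y ∈ S, sgMul x y ∈ S) {x y : Fin n → Fin n}
    (h : x ∈ lIdeal S y) : lIdeal S x ⊆ lIdeal S y := by
  rcases h with rfl | ⟨s, hs, rfl⟩
  · rfl
  rintro z (rfl | ⟨u, hu, rfl⟩)
  exacts [Or.inr ⟨s, hs, rfl⟩, Or.inr ⟨sgMul u s, hS u hu s hs, rfl⟩]

theorem rRel_of_sgMul_eq (hS : ∀ x ∈ S, ∀ y ∈ S, sgMul x y ∈ S) {e f : Fin n → Fin n}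
    (he : e ∈ S) (hf : f ∈ S) (hef : sgMul e f = f) (hfe : sgMul f e = e) : RRel S e f :=
  (rIdeal_subset_of_mem hS (Or.inr ⟨e, he, hfe.symm⟩)).antisymm
    (rIdeal_subset_of_mem hS (Or.inr ⟨f, hf, hef.symm⟩))

theorem lRel_of_sgMul_eq (hS : ∀ x ∈ S, ∀ y ∈ S, sgMul x y ∈ S) {e f : Fin n → Fin n}
    (he : e ∈ S) (hf : f ∈ S) (hef : sgMul e f = e) (hfe : sgMul f e = f) : LRel S e f :=
  (lIdeal_subset_of_mem hS (Or.inr ⟨e, he, hef.symm⟩)).antisymm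
    (lIdeal_subset_of_mem hS (Or.inr ⟨f, hf, hfe.symm⟩))

theorem mem_jIdeal_self (x : Fin n → Fin n) : x ∈ jIdeal S x :=
  ⟨id, Or.inl rfl, id, Or.inl rfl, rfl⟩

theorem sgMul_mem_insert_id (hS : ∀ x ∈ S, ∀ y ∈ S, sgMul x y ∈ S) {x y : Fin n → Fin n}
    (hx : x ∈ insert id S) (hy : y ∈ S) : sgMul x y ∈ S ∧ sgMul y x ∈ S := by
  rcases hx with rfl | hx
  exacts [⟨hy, hy⟩, ⟨hS x hx y hy, hS y hy x hx⟩]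

theorem jIdeal_subset_of_mem_lIdeal (hS : ∀ x ∈ S, ∀ y ∈ S, sgMul x y ∈ S)
    {x y : Fin n → Fin n} (h : x ∈ lIdeal S y) : jIdeal S x ⊆ jIdeal S y := by
  rcases h with rfl | ⟨s, hs, rfl⟩
  · rfl
  rintro z ⟨a, ha, t, ht, rfl⟩
  exact ⟨sgMul a s, Or.inr (sgMul_mem_insert_id hS ha hs).1, t, ht, rfl⟩

theorem jIdeal_subset_of_mem_rIdeal (hS : ∀ x ∈ S, ∀ y ∈ S, sgMul x y ∈ S)
    {x y : Fin n → Fin n} (h : x ∈ rIdeal S y) : jIdeal S x ⊆ jIdeal S y := by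
  rcases h with rfl | ⟨t, ht, rfl⟩
  · rfl
  rintro z ⟨s, hs, u, hu, rfl⟩
  exact ⟨s, hs, sgMul t u, Or.inr (sgMul_mem_insert_id hS hu ht).2, rfl⟩

theorem LRel.jRel (hS : ∀ x ∈ S, ∀ y ∈ S, sgMul x y ∈ S) {x y : Fin n → Fin n}
    (h : LRel S x y) : JRel S x y :=
  (jIdeal_subset_of_mem_lIdeal hS (h ▸ Or.inl rfl)).antisymm
    (jIdeal_subset_of_mem_lIdeal hS (h ▸ Or.inl rfl))

theorem RRel.jRel (hS : ∀ x ∈ S, ∀ y ∈ S, sgMul x y ∈ S) {x y : Fin n → Fin n}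
    (h : RRel S x y) : JRel S x y :=
  (jIdeal_subset_of_mem_rIdeal hS (h ▸ Or.inl rfl)).antisymm
    (jIdeal_subset_of_mem_rIdeal hS (h ▸ Or.inl rfl))

end Ideals

section Generators

variable {n : ℕ} {D : Set (Fin n × Fin n)}

theorem foldl_arcT_eq_comp (l : List (Fin n × Fin n)) (g : Fin n → Fin n) :
    l.foldl (fun f p => arcT p.1 p.2 ∘ f) g = l.foldl (fun f p => arcT p.1 p.2 ∘ f) id ∘ g := by
  induction l generalizing g with
  | nil => rfl
  | cons p l ih => simp only [List.foldl_cons, ih (arcT p.1 p.2 ∘ g), ih (arcT p.1 p.2 ∘ id)]; rfl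

theorem arcT_mem_genSg {a b : Fin n} (h : (a, b) ∈ D) : arcT a b ∈ genSg D :=
  ⟨[(a, b)], List.cons_ne_nil _ _, by simpa using h, rfl⟩

theorem sgMul_mem_genSg {x y : Fin n → Fin n} (hx : x ∈ genSg D) (hy : y ∈ genSg D) :
    sgMul x y ∈ genSg D := by
  obtain ⟨l₁, hl₁, hD₁, rfl⟩ := hx
  obtain ⟨l₂, -, hD₂, rfl⟩ := hy
  refine ⟨l₁ ++ l₂, by simp [hl₁], fun p hp => (List.mem_append.1 hp).elim (hD₁ p) (hD₂ p), ?_⟩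
  rw [List.foldl_append, foldl_arcT_eq_comp l₂ (l₁.foldl _ id)]
  rfl

theorem genSg_induction {P : (Fin n → Fin n) → Prop} (arc : ∀ a b, (a, b) ∈ D → P (arcT a b))
    (mul : ∀ x y, P x → P y → P (sgMul x y)) {α : Fin n → Fin n} (hα : α ∈ genSg D) : P α := by
  obtain ⟨_ | ⟨p, l⟩, hne, hl, rfl⟩ := hα
  · exact absurd rfl hne
  have key : ∀ l : List (Fin n × Fin n), (∀ q ∈ l, q ∈ D) → ∀ g, P g →
      P (l.foldl (fun f p => arcT p.1 p.2 ∘ f) g) := by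
    intro l
    induction l with
    | nil => exact fun _ _ hg => hg
    | cons q l ih =>
      intro hql g hg
      exact ih (fun r hr => hql r (.tail q hr)) _
        (mul g _ hg (arc q.1 q.2 (hql q List.mem_cons_self)))
  exact key l (fun q hq => hl q (.tail p hq)) _ (arc p.1 p.2 (hl p List.mem_cons_self))

@[simp]
theorem arcT_apply_self (a b : Fin n) : arcT a b a = b := if_pos rfl

theorem arcT_apply_of_ne {a b x : Fin n} (hx : x ≠ a) : arcT a b x = x := if_neg hx

theorem arcT_sgMul_arcT {a b : Fin n} (hb : b ≠ a) (c : Fin n) :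
    sgMul (arcT a b) (arcT a c) = arcT a b := by
  funext x
  by_cases hx : x = a <;> simp [sgMul, arcT, hx, hb]

open Classical in
noncomputable def collapse (T : Set (Fin n)) (a : Fin n) : Fin n → Fin n :=
  fun x => if x ∈ T then a else x

theorem collapse_apply_of_mem {T : Set (Fin n)} {x : Fin n} (a : Fin n) (hx : x ∈ T) :
    collapse T a x = a := if_pos hx

theorem collapse_apply_of_notMem {T : Set (Fin n)} {x : Fin n} (a : Fin n) (hx : x ∉ T) :
    collapse T a x = x := if_neg hx

theorem collapse_sgMul_collapse {T : Set (Fin n)} {a : Fin n} (ha : a ∈ T) (b : Fin n) :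
    sgMul (collapse T a) (collapse T b) = collapse T b := by
  funext x
  by_cases hx : x ∈ T
  · simp only [sgMul, Function.comp_apply, collapse_apply_of_mem _ hx, collapse_apply_of_mem _ ha]
  · simp only [sgMul, Function.comp_apply, collapse_apply_of_notMem _ hx]

theorem collapse_sgMul_arcT {T : Set (Fin n)} {a : Fin n} (ha : a ∈ T) (b : Fin n) :
    sgMul (collapse T a) (arcT a b) = collapse T b := by
  funext x
  by_cases hx : x ∈ T
  · simp only [sgMul, Function.comp_apply, collapse_apply_of_mem _ hx, arcT_apply_self]
  · have hxa : x ≠ a := fun h => hx (h ▸ ha)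
    simp only [sgMul, Function.comp_apply, collapse_apply_of_notMem _ hx, arcT_apply_of_ne hxa]

def walkT (v : ℕ → Fin n) : ℕ → Fin n → Fin n
  | 0 => id
  | k + 1 => arcT (v k) (v (k + 1)) ∘ walkT v k

theorem walkT_mem_genSg {v : ℕ → Fin n} {k : ℕ} (hk : 1 ≤ k)
    (harc : ∀ i < k, (v i, v (i + 1)) ∈ D) : walkT v k ∈ genSg D := by
  induction k with
  | zero => omega
  | succ k ih =>
    have hlast := arcT_mem_genSg (harc k k.lt_succ_self)
    rcases Nat.eq_zero_or_pos k with rfl | hk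
    · exact hlast
    · exact sgMul_mem_genSg (ih hk fun i hi => harc i (by omega)) hlast

theorem walkT_eq_collapse (v : ℕ → Fin n) (k : ℕ) :
    walkT v k = collapse {x | ∃ j ≤ k, v j = x} (v k) := by
  induction k with
  | zero =>
    funext x
    by_cases hx : v 0 = x <;> simp [walkT, collapse, hx]
  | succ k ih =>
    funext x
    simp only [walkT, Function.comp_apply, ih]
    by_cases hx : x ∈ {x | ∃ j ≤ k, v j = x}
    · have hx' : x ∈ {x | ∃ j ≤ k + 1, v j = x} := hx.imp fun j ⟨hj, hjx⟩ => ⟨by omega, hjx⟩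
      rw [collapse_apply_of_mem _ hx, collapse_apply_of_mem _ hx', arcT_apply_self]
    · have hxk : x ≠ v k := fun h => hx ⟨k, le_rfl, h.symm⟩
      rw [collapse_apply_of_notMem _ hx, arcT_apply_of_ne hxk]
      by_cases hx' : v (k + 1) = x
      · have hmem : x ∈ {x | ∃ j ≤ k + 1, v j = x} := ⟨k + 1, le_rfl, hx'⟩
        rw [collapse_apply_of_mem _ hmem, hx']
      · refine (collapse_apply_of_notMem _ ?_).symm
        rintro ⟨j, hj, rfl⟩
        rcases Nat.lt_or_ge j (k + 1) with h | h
        exacts [hx ⟨j, by omega, rfl⟩, hx' (by rw [show j = k + 1 by omega])]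

end Generators

section Idempotents

variable {n : ℕ} {D : Set (Fin n × Fin n)}

def LIdempotentUnique (S : Set (Fin n → Fin n)) : Prop :=
  ∀ x ∈ S, ∀ y ∈ S, sgMul x x = x → sgMul y y = y → LRel S x y → x = y

def RIdempotentUnique (S : Set (Fin n → Fin n)) : Prop :=
  ∀ x ∈ S, ∀ y ∈ S, sgMul x x = x → sgMul y y = y → RRel S x y → x = y

theorem outDegree_subsingleton_of_lIdempotentUnique (hloop : ∀ u : Fin n, (u, u) ∉ D)
    (hL : LIdempotentUnique (genSg D)) (a : Fin n) : {b : Fin n | (a, b) ∈ D}.Subsingleton := by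
  intro b hb c hc
  have hba : b ≠ a := fun h => hloop a (h ▸ hb)
  have hca : c ≠ a := fun h => hloop a (h ▸ hc)
  have hbc : sgMul (arcT a b) (arcT a c) = arcT a b := arcT_sgMul_arcT hba c
  have hcb : sgMul (arcT a c) (arcT a b) = arcT a c := arcT_sgMul_arcT hca b
  have heq := hL _ (arcT_mem_genSg hb) _ (arcT_mem_genSg hc)
    (arcT_sgMul_arcT hba b) (arcT_sgMul_arcT hca c)
    (lRel_of_sgMul_eq (fun _ hx _ hy => sgMul_mem_genSg hx hy)
      (arcT_mem_genSg hb) (arcT_mem_genSg hc) hbc hcb)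
  simpa using congrFun heq a

theorem dAcyclic_of_rIdempotentUnique (hloop : ∀ u : Fin n, (u, u) ∉ D)
    (hR : RIdempotentUnique (genSg D)) : DAcyclic D := by
  rintro ⟨r, v, hr, hvr, -, harc⟩
  set T : Set (Fin n) := {x | ∃ j ≤ r, v j = x}
  have h0 : v 0 ∈ T := ⟨0, Nat.zero_le r, rfl⟩
  have h1 : v 1 ∈ T := ⟨1, hr, rfl⟩
  have hmem₀ : collapse T (v 0) ∈ genSg D := by
    rw [← hvr, ← walkT_eq_collapse]
    exact walkT_mem_genSg hr harc
  have hmem₁ : collapse T (v 1) ∈ genSg D := by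
    rw [← collapse_sgMul_arcT h0]
    exact sgMul_mem_genSg hmem₀ (arcT_mem_genSg (harc 0 hr))
  have heq := hR _ hmem₀ _ hmem₁ (collapse_sgMul_collapse h0 _) (collapse_sgMul_collapse h1 _)
    (rRel_of_sgMul_eq (fun _ hx _ hy => sgMul_mem_genSg hx hy) hmem₀ hmem₁
      (collapse_sgMul_collapse h0 _) (collapse_sgMul_collapse h1 _))
  have hv : v 0 = v 1 := by
    simpa only [collapse_apply_of_mem _ h0] using congrFun heq (v 0)
  exact hloop (v 0) (hv ▸ harc 0 hr)

end Idempotents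

section Reachability

variable {n : ℕ} {D : Set (Fin n × Fin n)}

theorem Relation.TransGen.exists_walk {α : Type*} {R : α → α → Prop} {a b : α}
    (h : Relation.TransGen R a b) :
    ∃ m, 1 ≤ m ∧ ∃ v : ℕ → α, v 0 = a ∧ v m = b ∧ ∀ i < m, R (v i) (v (i + 1)) := by
  induction h with
  | single hab => exact ⟨1, le_rfl, fun i => if i = 0 then a else _, rfl, rfl, by simpa⟩
  | @tail c d _ hcd ih =>
    obtain ⟨m, hm, v, hv0, hvm, harc⟩ := ih
    refine ⟨m + 1, by omega, fun i => if i ≤ m then v i else d, by simp [hv0], by simp, ?_⟩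
    intro i hi
    rcases Nat.lt_or_ge i m with h | h
    · simpa [h.le, Nat.succ_le_of_lt h] using harc i h
    · obtain rfl : i = m := by omega
      simpa [hvm] using hcd

/- A shortest closed walk is a cycle: a repeated vertex would split off a shorter closed walk. -/
theorem hasDCycle_of_closed_walk {r : ℕ} (hr : 1 ≤ r) {v : ℕ → Fin n} (hv : v r = v 0)
    (harc : ∀ i < r, (v i, v (i + 1)) ∈ D) : HasDCycle D := by
  induction r using Nat.strong_induction_on generalizing v with
  | _ r ih =>
  by_cases hinj : ∀ i < r, ∀ j < r, v i = v j → i = j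
  · exact ⟨r, v, hr, hv, hinj, harc⟩
  push Not at hinj
  obtain ⟨i, hi, j, hj, hij, hne⟩ := hinj
  wlog hlt : i < j generalizing i j
  · exact this j hj i hi hij.symm hne.symm (by omega)
  refine ih (j - i) (by omega) (by omega) (v := fun k => v (i + k)) ?_ fun k hk => ?_
  · simp only [Nat.add_sub_cancel' hlt.le, add_zero, hij]
  · simpa only [add_assoc] using harc (i + k) (by omega)

theorem DAcyclic.dreach_antisymm (hD : DAcyclic D) {a b : Fin n} (hab : dreach D a b)
    (hba : dreach D b a) : a = b := by
  by_contra hne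
  have hcyc : Relation.TransGen (fun a b => (a, b) ∈ D) a a :=
    ((Relation.reflTransGen_iff_eq_or_transGen.1 hab).resolve_left (Ne.symm hne)).trans_left hba
  obtain ⟨m, hm, v, hv0, hvm, harc⟩ := hcyc.exists_walk
  exact hD (hasDCycle_of_closed_walk hm (hvm.trans hv0.symm) harc)

def IsMonotoneInflationary (D : Set (Fin n × Fin n)) (α : Fin n → Fin n) : Prop :=
  (∀ x, dreach D x (α x)) ∧ ∀ x y, dreach D x y → dreach D (α x) (α y)

theorem isMonotoneInflationary_id : IsMonotoneInflationary D id :=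
  ⟨fun _ => .refl, fun _ _ h => h⟩

theorem IsMonotoneInflationary.sgMul {α β : Fin n → Fin n} (hα : IsMonotoneInflationary D α)
    (hβ : IsMonotoneInflationary D β) : IsMonotoneInflationary D (sgMul α β) :=
  ⟨fun x => (hα.1 x).trans (hβ.1 (α x)), fun x y h => hβ.2 _ _ (hα.2 x y h)⟩

/- Monotonicity at `x = a`: a walk leaving `a` must start with the only arc `(a, b)`. -/
theorem isMonotoneInflationary_arcT (hout : ∀ a : Fin n, {b : Fin n | (a, b) ∈ D}.Subsingleton)
    {a b : Fin n} (hab : (a, b) ∈ D) : IsMonotoneInflationary D (arcT a b) := by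
  refine ⟨fun x => ?_, fun x y h => ?_⟩
  · by_cases hx : x = a
    · subst hx
      rw [arcT_apply_self]
      exact .single hab
    · rw [arcT_apply_of_ne hx]
      exact .refl
  by_cases hx : x = a <;> by_cases hy : y = a
  · subst hx hy
    exact .refl
  · subst hx
    rcases Relation.ReflTransGen.cases_head h with rfl | ⟨c, hac, hcy⟩
    · exact absurd rfl hy
    · rwa [arcT_apply_self, arcT_apply_of_ne hy, ← hout x hac hab]
  · subst hy
    rw [arcT_apply_self, arcT_apply_of_ne hx]
    exact h.tail hab
  · rwa [arcT_apply_of_ne hx, arcT_apply_of_ne hy]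

theorem isMonotoneInflationary_of_mem_genSg
    (hout : ∀ a : Fin n, {b : Fin n | (a, b) ∈ D}.Subsingleton) {α : Fin n → Fin n}
    (hα : α ∈ genSg D) : IsMonotoneInflationary D α :=
  genSg_induction (fun _ _ => isMonotoneInflationary_arcT hout) (fun _ _ => .sgMul) hα

theorem dreach_of_mem_jIdeal {S : Set (Fin n → Fin n)}
    (hS : ∀ s ∈ S, IsMonotoneInflationary D s) {x y : Fin n → Fin n}
    (hy : IsMonotoneInflationary D y) (hx : x ∈ jIdeal S y) (v : Fin n) : dreach D (y v) (x v) := by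
  obtain ⟨s, hs, t, ht, rfl⟩ := hx
  have hS' : ∀ u ∈ insert id S, IsMonotoneInflationary D u := by
    rintro u (rfl | hu)
    exacts [isMonotoneInflationary_id, hS u hu]
  exact (hy.2 _ _ ((hS' s hs).1 v)).trans ((hS' t ht).1 _)

theorem DAcyclic.jTrivial {S : Set (Fin n → Fin n)} (hD : DAcyclic D)
    (hS : ∀ s ∈ S, IsMonotoneInflationary D s) : JTrivial S := by
  intro x hx y hy hxy
  funext v
  exact hD.dreach_antisymm
    (dreach_of_mem_jIdeal hS (hS x hx) (hxy ▸ mem_jIdeal_self y) v)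
    (dreach_of_mem_jIdeal hS (hS y hy) (hxy ▸ mem_jIdeal_self x) v)

end Reachability

theorem stmt13_general (n : ℕ) (D : Set (Fin n × Fin n)) (hloop : ∀ u : Fin n, (u, u) ∉ D) :
    List.TFAE [
      ∀ x ∈ genSg D, ∀ y ∈ genSg D, sgMul x x = x → sgMul y y = y →
        (LRel (genSg D) x y ∨ RRel (genSg D) x y) → x = y,
      JTrivial (genSg D),
      DAcyclic D ∧ ∀ a : Fin n, { b : Fin n | (a, b) ∈ D }.Subsingleton] := by
  have hmul : ∀ x ∈ genSg D, ∀ y ∈ genSg D, sgMul x y ∈ genSg D :=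
    fun _ hx _ hy => sgMul_mem_genSg hx hy
  tfae_have 1 → 3 := fun h =>
    ⟨dAcyclic_of_rIdempotentUnique hloop fun x hx y hy hxx hyy hR => h x hx y hy hxx hyy (.inr hR),
      outDegree_subsingleton_of_lIdempotentUnique hloop
        fun x hx y hy hxx hyy hL => h x hx y hy hxx hyy (.inl hL)⟩
  tfae_have 3 → 2 := fun ⟨hD, hout⟩ =>
    hD.jTrivial fun _ => isMonotoneInflationary_of_mem_genSg hout
  tfae_have 2 → 1 := fun hJ x hx y hy _ _ hLR =>
    hJ x hx y hy (hLR.elim (LRel.jRel hmul) (RRel.jRel hmul))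
  tfae_finish

/-- The following are equivalent: every `L`-class and every `R`-class
of `⟨D⟩` contains at most one idempotent; `⟨D⟩` is `J`-trivial; `D` is acyclic with all
out-degrees at most one. -/
theorem stmt13 (n : ℕ) (D : Set (Fin n × Fin n)) (hloop : ∀ u : Fin n, (u, u) ∉ D)
    (hne : D.Nonempty) :
    List.TFAE [
      ∀ x ∈ genSg D, ∀ y ∈ genSg D, sgMul x x = x → sgMul y y = y →
        (LRel (genSg D) x y ∨ RRel (genSg D) x y) → x = y,
      JTrivial (genSg D),
      DAcyclic D ∧ ∀ a : Fin n, { b : Fin n | (a, b) ∈ D }.Subsingleton] :=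
  stmt13_general n D hloop
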